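/- arXiv:1002.2440 — 2 statements merged into one kernel-verified Lean document; each statement's English description precedes it below -/
import Mathlib

section
/- The optimal offline cost OPT(σ) of serving a request sequence σ is at least the sum over all unordered pairs {x,y} of items of the optimal cost of serving the projected sequence σ_{xy} on the two-item list consisting of x and y in their initial relative order. -/
abbrev Before {I : Type} [DecidableEq I] (x y : I) (L : List I) : Prop :=
  L.idxOf x < L.idxOf y

/-- Projection of a request sequence to the requests to `x` and `y`. -/
def proj2 {I : Type} [DecidableEq I] (x y : I) (σ : List I) : List I :=
  σ.filter (fun z => decide (z = x ∨ z = y))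

/-- Kendall tau distance between the list states `L` and `M`. -/
def numInv {I : Type} [DecidableEq I] (L M : List I) : ℕ :=
  ((L.product L).filter
    (fun p => decide (L.idxOf p.1 < L.idxOf p.2 ∧ M.idxOf p.2 < M.idxOf p.1))).length

/-- Total cost in the partial cost model: paid exchanges plus access position. -/
def totalCostAux {I : Type} [DecidableEq I] (S : List I → List I) :
    List I → List I → ℕ
  | _, [] => 0
  | pref, z :: rest =>
      numInv (S pref) (S (pref ++ [z])) + (S (pref ++ [z])).idxOf z
        + totalCostAux S (pref ++ [z]) rest

def totalCost {I : Type} [DecidableEq I] (S : List I → List I) (σ : List I) : ℕ :=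
  totalCostAux S [] σ

/-- Optimal offline cost of serving `σ` starting from list state `L0`. -/
noncomputable def optCost {I : Type} [DecidableEq I] (L0 σ : List I) : ℕ :=
  sInf { c | ∃ S : List I → List I, S [] = L0 ∧ (∀ τ, (S τ).Perm L0) ∧ totalCost S σ = c }

/-!
Fix an optimal strategy `S` for `σ`. A step of `S` costs the Kendall distance `d` between
consecutive lists plus the number of items in front of the requested one, and both counts
split over unordered pairs `{x, y}`. The share of `{x, y}` is the cost of the projected
strategy on the two-element list, except that the projected list may also change at requests
to other items. The dynamic-programming inequalities
`OPT_L(z :: τ) ≤ d(L, M) + M.idxOf z + OPT_M(τ)` and `OPT_L(τ) ≤ d(L, M) + OPT_M(τ)` (the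
latter from the triangle inequality for `d`) bound `OPT_{xy}(σ_{xy})` by that share.
-/

section Projection
variable {I : Type} [DecidableEq I]

lemma proj2_comm (x y : I) (A : List I) : proj2 x y A = proj2 y x A :=
  List.filter_congr fun a _ => by simp [or_comm]

lemma proj2_cons (x y a : I) (A : List I) :
    proj2 x y (a :: A) = if a = x ∨ a = y then a :: proj2 x y A else proj2 x y A := by
  simp only [proj2, List.filter_cons, decide_eq_true_eq]

lemma proj2_eq_singleton {x y : I} {A : List I} (hA : A.Nodup) (hx : x ∉ A) (hy : y ∈ A) :
    proj2 x y A = [y] := by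
  have : proj2 x y A = A.filter (· = y) :=
    List.filter_congr fun a ha => by simp [show a ≠ x from fun h => hx (h ▸ ha)]
  rw [this, List.filter_eq, List.count_eq_one_of_mem hA hy, List.replicate_one]

lemma proj2_eq_ite {x y : I} {A : List I} (hA : A.Nodup) (hx : x ∈ A) (hy : y ∈ A)
    (hxy : x ≠ y) : proj2 x y A = if A.idxOf x < A.idxOf y then [x, y] else [y, x] := by
  induction A with
  | nil => simp at hx
  | cons a A ih =>
    obtain ⟨haA, hA⟩ := List.nodup_cons.1 hA
    by_cases hax : a = x
    · subst hax
      have hyA : y ∈ A := (List.mem_cons.1 hy).resolve_left (Ne.symm hxy)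
      simp [proj2_cons, proj2_eq_singleton hA haA hyA, List.idxOf_cons_ne _ hxy]
    by_cases hay : a = y
    · subst hay
      have hxA : x ∈ A := (List.mem_cons.1 hx).resolve_left (Ne.symm hax)
      simp [proj2_cons, proj2_comm x a, proj2_eq_singleton hA haA hxA, List.idxOf_cons_ne _ hax]
    have hxA : x ∈ A := (List.mem_cons.1 hx).resolve_left (Ne.symm hax)
    have hyA : y ∈ A := (List.mem_cons.1 hy).resolve_left (Ne.symm hay)
    simp [proj2_cons, hax, hay, List.idxOf_cons_ne, ih hA hxA hyA]

end Projection

lemma List.countP_le_countP_add_countP {α : Type*} {p q r : α → Bool} {l : List α}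
    (h : ∀ a ∈ l, p a → q a ∨ r a) : l.countP p ≤ l.countP q + l.countP r := by
  induction l with
  | nil => simp
  | cons a l ih =>
    have := ih fun b hb => h b (List.mem_cons_of_mem a hb)
    have ha := h a List.mem_cons_self
    simp only [List.countP_cons]
    split_ifs <;> simp_all <;> omega

section Inversions
variable {I : Type} [DecidableEq I]

lemma numInv_eq_countP (L M : List I) :
    numInv L M = (L.product L).countP
      (fun p => decide (L.idxOf p.1 < L.idxOf p.2 ∧ M.idxOf p.2 < M.idxOf p.1)) :=
  List.countP_eq_length_filter.symm

lemma numInv_self (L : List I) : numInv L L = 0 := by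
  simp only [numInv_eq_countP, List.countP_eq_zero, decide_eq_true_eq]
  omega

lemma numInv_le_add {L M : List I} (hLM : L.Perm M) (N : List I) :
    numInv L N ≤ numInv L M + numInv M N := by
  rw [numInv_eq_countP, numInv_eq_countP, numInv_eq_countP, ← (hLM.product hLM).countP_eq]
  refine List.countP_le_countP_add_countP fun ⟨a, b⟩ hab hinv => ?_
  simp only [List.pair_mem_product, decide_eq_true_eq] at hab hinv ⊢
  rcases lt_trichotomy (M.idxOf a) (M.idxOf b) with h | h | h
  · exact Or.inr ⟨h, hinv.2⟩
  · obtain rfl : a = b := (List.idxOf_inj (hLM.subset hab.1)).1 h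
    exact absurd hinv.1 (lt_irrefl _)
  · exact Or.inl ⟨hinv.1, h⟩

end Inversions

lemma Finset.sum_sum_ite_lt_add_swap {ι M : Type*} [Fintype ι] [LinearOrder ι]
    [AddCommMonoid M] (g : ι → ι → M) (hg : ∀ x, g x x = 0) :
    ∑ x, ∑ y, (if x < y then g x y + g y x else 0) = ∑ x, ∑ y, g x y := by
  have hsplit : ∀ x y,
      g x y = (if x < y then g x y else 0) + (if y < x then g x y else 0) := by
    intro x y
    rcases lt_trichotomy x y with h | rfl | h
    · simp [h, h.not_gt]
    · simp [hg]
    · simp [h, h.not_gt]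
  have hswap :
      ∑ x, ∑ y, (if x < y then g y x else 0) = ∑ x, ∑ y, (if y < x then g x y else 0) :=
    Finset.sum_comm
  calc ∑ x, ∑ y, (if x < y then g x y + g y x else 0)
      = ∑ x, ∑ y, (if x < y then g x y else 0)
          + ∑ x, ∑ y, (if x < y then g y x else 0) := by
        simp only [ite_add_zero, Finset.sum_add_distrib]
    _ = ∑ x, ∑ y, g x y := by
        simp only [hswap, ← Finset.sum_add_distrib, ← hsplit]

section Counting
variable {I : Type} [DecidableEq I] [Fintype I]

lemma numInv_eq_sum {A : List I} (hA : A.Nodup) (hAu : ∀ w, w ∈ A) (B : List I) :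
    numInv A B = ∑ x, ∑ y,
      if A.idxOf x < A.idxOf y ∧ B.idxOf y < B.idxOf x then 1 else 0 := by
  have hprod : (A.product A).toFinset = Finset.univ := by
    ext ⟨a, b⟩; simp [List.pair_mem_product, hAu]
  have hnd : ((A.product A).filter fun p =>
      decide (A.idxOf p.1 < A.idxOf p.2 ∧ B.idxOf p.2 < B.idxOf p.1)).Nodup :=
    (hA.product hA).filter _
  rw [numInv, ← List.toFinset_card_of_nodup hnd, List.toFinset_filter,
    hprod, Finset.card_filter, Fintype.sum_prod_type]
  simp only [decide_eq_true_eq]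

lemma idxOf_eq_sum {B : List I} (hB : B.Nodup) (hBu : ∀ w, w ∈ B) (z : I) :
    B.idxOf z = ∑ w, if B.idxOf w < B.idxOf z then 1 else 0 := by
  have hbefore :
      Finset.univ.filter (fun w => B.idxOf w < B.idxOf z) = (B.take (B.idxOf z)).toFinset := by
    ext w; simp [List.mem_take_iff_idxOf_lt (hBu w)]
  rw [Finset.sum_boole, hbefore, List.toFinset_card_of_nodup (hB.sublist (List.take_sublist _ _)),
    List.length_take, min_eq_left (List.idxOf_lt_length_iff.2 (hBu z)).le]
  simp

end Counting

section PairStep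
variable {I : Type} [DecidableEq I]

lemma numInv_pair_swap {x y : I} (hxy : x ≠ y) : numInv [x, y] [y, x] = 1 := by
  simp [numInv, List.product, List.idxOf_cons, Bool.cond_eq_ite, beq_iff_eq, hxy, hxy.symm]

lemma numInv_proj2_add_idxOf_eq {A B : List I} (hA : A.Nodup) (hB : B.Nodup) (hAu : ∀ w, w ∈ A)
    (hBu : ∀ w, w ∈ B) {x y : I} (hxy : x ≠ y) (z : I) :
    numInv (proj2 x y A) (proj2 x y B) + (if z = x ∨ z = y then (proj2 x y B).idxOf z else 0)
      = (if A.idxOf x < A.idxOf y ∧ B.idxOf y < B.idxOf x then 1 else 0)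
          + (if z = y ∧ B.idxOf x < B.idxOf y then 1 else 0)
        + ((if A.idxOf y < A.idxOf x ∧ B.idxOf x < B.idxOf y then 1 else 0)
          + (if z = x ∧ B.idxOf y < B.idxOf x then 1 else 0)) := by
  have hA' : A.idxOf x ≠ A.idxOf y := fun h => hxy ((List.idxOf_inj (hAu x)).1 h)
  have hB' : B.idxOf x ≠ B.idxOf y := fun h => hxy ((List.idxOf_inj (hBu x)).1 h)
  rw [proj2_eq_ite hA (hAu x) (hAu y) hxy, proj2_eq_ite hB (hBu x) (hBu y) hxy]
  rcases hA'.lt_or_gt with ha | ha <;> rcases hB'.lt_or_gt with hb | hb <;>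
    by_cases hzx : z = x <;> by_cases hzy : z = y <;>
    simp [ha, hb, ha.not_gt, hb.not_gt, hzx, hzy, hxy, hxy.symm, numInv_self,
      numInv_pair_swap hxy, numInv_pair_swap hxy.symm]

end PairStep

lemma numInv_add_idxOf_eq_sum_pairs {I : Type} [DecidableEq I] [Fintype I] [LinearOrder I]
    {A B : List I} (hA : A.Nodup) (hB : B.Nodup) (hAu : ∀ w, w ∈ A) (hBu : ∀ w, w ∈ B)
    (z : I) :
    numInv A B + B.idxOf z = ∑ x, ∑ y, if x < y then
      numInv (proj2 x y A) (proj2 x y B) + (if z = x ∨ z = y then (proj2 x y B).idxOf z else 0)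
      else 0 := by
  set g : I → I → ℕ := fun x y =>
    (if A.idxOf x < A.idxOf y ∧ B.idxOf y < B.idxOf x then 1 else 0)
      + (if z = y ∧ B.idxOf x < B.idxOf y then 1 else 0)
  calc numInv A B + B.idxOf z = ∑ x, ∑ y, g x y := by
        rw [numInv_eq_sum hA hAu, idxOf_eq_sum hB hBu z]
        simp only [g, Finset.sum_add_distrib, ite_and, Finset.sum_ite_eq, Finset.mem_univ,
          if_true]
    _ = ∑ x, ∑ y, if x < y then g x y + g y x else 0 :=
        (Finset.sum_sum_ite_lt_add_swap g fun x => by simp [g]).symm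
    _ = _ := by
        refine Finset.sum_congr rfl fun x _ => Finset.sum_congr rfl fun y _ => ?_
        by_cases h : x < y
        · rw [if_pos h, if_pos h, numInv_proj2_add_idxOf_eq hA hB hAu hBu h.ne z]
        · rw [if_neg h, if_neg h]

section Strategies
variable {I : Type} [DecidableEq I]

lemma exists_totalCost_eq_optCost (L σ : List I) :
    ∃ S : List I → List I,
      S [] = L ∧ (∀ τ, (S τ).Perm L) ∧ totalCost S σ = optCost L σ :=
  Nat.sInf_mem (s := {c | ∃ S : List I → List I,
      S [] = L ∧ (∀ τ, (S τ).Perm L) ∧ totalCost S σ = c})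
    ⟨_, fun _ => L, rfl, fun _ => .refl L, rfl⟩

lemma optCost_le_totalCost {S : List I → List I} (hS : ∀ τ, (S τ).Perm (S [])) (σ : List I) :
    optCost (S []) σ ≤ totalCost S σ :=
  Nat.sInf_le ⟨S, rfl, hS, rfl⟩

lemma optCost_nil (L : List I) : optCost L [] = 0 :=
  Nat.le_zero.1 (optCost_le_totalCost (S := fun _ => L) (fun _ => .refl L) [])

lemma totalCostAux_cons_prefix (S : List I → List I) (z : I) (σ pref : List I) :
    totalCostAux S (z :: pref) σ = totalCostAux (fun ρ => S (z :: ρ)) pref σ := by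
  induction σ generalizing pref with
  | nil => rfl
  | cons w σ ih => simp only [totalCostAux, List.cons_append, ih]

lemma totalCost_cons (S : List I → List I) (z : I) (σ : List I) :
    totalCost S (z :: σ)
      = numInv (S []) (S [z]) + (S [z]).idxOf z + totalCost (fun ρ => S (z :: ρ)) σ := by
  simp only [totalCost, totalCostAux, List.nil_append, totalCostAux_cons_prefix]

lemma optCost_cons_le {L M : List I} (hML : M.Perm L) (z : I) (τ : List I) :
    optCost L (z :: τ) ≤ numInv L M + M.idxOf z + optCost M τ := by
  obtain ⟨S, hS0, hS, hSτ⟩ := exists_totalCost_eq_optCost M τ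
  let S' : List I → List I
    | [] => L
    | _ :: ρ => S ρ
  have hS' : ∀ ρ, (S' ρ).Perm (S' []) := by
    rintro (_ | ⟨_, ρ⟩)
    exacts [.refl L, (hS ρ).trans hML]
  calc optCost L (z :: τ) ≤ totalCost S' (z :: τ) := optCost_le_totalCost hS' _
    _ = numInv L M + M.idxOf z + optCost M τ := by
        rw [totalCost_cons, ← hSτ, ← hS0]

lemma optCost_le_numInv_add {L M : List I} (hML : M.Perm L) (τ : List I) :
    optCost L τ ≤ numInv L M + optCost M τ := by
  cases τ with
  | nil => simp [optCost_nil]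
  | cons w ρ =>
    obtain ⟨S, rfl, hS, hSτ⟩ := exists_totalCost_eq_optCost M (w :: ρ)
    have hSw : ∀ τ, (S (w :: τ)).Perm (S [w]) := fun τ => (hS _).trans (hS [w]).symm
    calc optCost L (w :: ρ) ≤ numInv L (S [w]) + (S [w]).idxOf w + optCost (S [w]) ρ :=
          optCost_cons_le ((hS [w]).trans hML) w ρ
      _ ≤ numInv L (S []) + numInv (S []) (S [w]) + (S [w]).idxOf w
            + totalCost (fun τ => S (w :: τ)) ρ := by
          gcongr
          · exact numInv_le_add hML.symm _
          · exact optCost_le_totalCost hSw ρ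
      _ = numInv L (S []) + optCost (S []) (w :: ρ) := by
          rw [← hSτ, totalCost_cons]; ring

end Strategies

section PairCost
variable {I : Type} [DecidableEq I]

def pairCost (x y : I) : (List I → List I) → List I → ℕ
  | _, [] => 0
  | S, z :: σ =>
      numInv (proj2 x y (S [])) (proj2 x y (S [z]))
        + (if z = x ∨ z = y then (proj2 x y (S [z])).idxOf z else 0)
        + pairCost x y (fun ρ => S (z :: ρ)) σ

lemma optCost_proj2_le_pairCost (x y : I) {S : List I → List I}
    (hS : ∀ τ, (S τ).Perm (S [])) (σ : List I) :
    optCost (proj2 x y (S [])) (proj2 x y σ) ≤ pairCost x y S σ := by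
  induction σ generalizing S with
  | nil => simp [proj2, optCost_nil]
  | cons z σ ih =>
    have hSz : ∀ τ, (S (z :: τ)).Perm (S [z]) := fun τ => (hS _).trans (hS [z]).symm
    have hstep : (proj2 x y (S [z])).Perm (proj2 x y (S [])) := (hS [z]).filter _
    have hrest := ih hSz
    rw [proj2_cons, pairCost]
    split_ifs with hz
    · exact (optCost_cons_le hstep z _).trans (by omega)
    · exact (optCost_le_numInv_add hstep _).trans (by omega)

lemma totalCost_eq_sum_pairCost [Fintype I] [LinearOrder I] {S : List I → List I}
    (hSn : ∀ τ, (S τ).Nodup) (hSu : ∀ τ w, w ∈ S τ) (σ : List I) :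
    totalCost S σ = ∑ x, ∑ y, if x < y then pairCost x y S σ else 0 := by
  induction σ generalizing S with
  | nil => simp [totalCost, totalCostAux, pairCost]
  | cons z σ ih =>
    rw [totalCost_cons, numInv_add_idxOf_eq_sum_pairs (hSn _) (hSn _) (hSu _) (hSu _),
      ih (fun _ => hSn _) (fun _ => hSu _), ← Finset.sum_add_distrib]
    refine Finset.sum_congr rfl fun x _ => ?_
    rw [← Finset.sum_add_distrib]
    refine Finset.sum_congr rfl fun y _ => ?_
    by_cases h : x < y
    · rw [if_pos h, if_pos h, if_pos h, pairCost]
    · rw [if_neg h, if_neg h, if_neg h]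

end PairCost

/-- `OPT(σ)` is at least the sum over all unordered pairs `{x,y}` of
the optimal cost of serving the projected sequence `σ_{xy}` on the two-item list of
`x` and `y` in their initial relative order. -/
theorem optCost_ge_sum_pair_optCost
    {I : Type} [DecidableEq I] [Fintype I] [LinearOrder I]
    (L0 : List I) (hnodup : L0.Nodup) (huniv : ∀ x : I, x ∈ L0) (σ : List I) :
    (∑ x : I, ∑ y : I, if x < y then optCost (proj2 x y L0) (proj2 x y σ) else 0)
      ≤ optCost L0 σ := by
  obtain ⟨S, rfl, hS, hopt⟩ := exists_totalCost_eq_optCost L0 σ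
  rw [← hopt, totalCost_eq_sum_pairCost (fun τ => (hS τ).nodup_iff.2 hnodup)
    (fun τ w => (hS τ).mem_iff.2 (huniv w))]
  gcongr with x _ y _
  split_ifs
  exacts [optCost_proj2_le_pairCost x y hS σ, le_rfl]
end

section
/- Let x_(q), y_(l) be an agile pair in some sequence λ ∈ perm(x^i y^j) for a deterministic projective algorithm, and suppose |R(x^i)| = |R(y^j)| = 1. Then in every sequence σ ∈ perm(x^i y^j) in which the q-th request to x and the l-th request to y are adjacent, transposing them changes the relative order of x and y in S(σ). -/
def Projective {I : Type} [DecidableEq I] (S : List I → List I) : Prop :=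
  ∀ (x y : I) (σ : List I), Before x y (S σ) ↔ Before x y (S (proj2 x y σ))

/-- The sequence `σ` with the requests at positions `p` and `p+1` transposed. -/
def SwapAt {I : Type} (σ : List I) (p : ℕ) : List I :=
  σ.take p ++ ((σ.drop p).take 2).reverse ++ σ.drop (p + 2)

/-- The requests at positions `p`, `p+1` of `σ` are an agile pair of requests to `x`
and `y`: they are adjacent requests to `x` and `y` (in either order) and transposing
them changes the relative order of `x` and `y` in the resulting list state. -/
def AgilePairAt {I : Type} [DecidableEq I] (S : List I → List I)
    (σ : List I) (p : ℕ) (x y : I) : Prop :=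
  ((σ[p]? = some x ∧ σ[p + 1]? = some y) ∨
   (σ[p]? = some y ∧ σ[p + 1]? = some x)) ∧
  ¬ (Before x y (S σ) ↔ Before x y (S (SwapAt σ p)))

/-- `x` and `y` are adjacent in the list state `L`. -/
def AdjacentIn {I : Type} (x y : I) (L : List I) : Prop :=
  ∃ k, (L[k]? = some x ∧ L[k + 1]? = some y) ∨
       (L[k]? = some y ∧ L[k + 1]? = some x)

/-- `τ ∈ perm(x^i y^j)`: exactly `i` requests to `x`, `j` requests to `y`, nothing else. -/
def InPerm {I : Type} [DecidableEq I] (x y : I) (i j : ℕ) (τ : List I) : Prop :=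
  τ.count x = i ∧ τ.count y = j ∧ ∀ z ∈ τ, z = x ∨ z = y

/-- The pair of unary projections `x^i`, `y^j` is agile: both relative orders of `x`
and `y` are realized by sequences in `perm(x^i y^j)`. -/
def Agile {I : Type} [DecidableEq I] (S : List I → List I) (x : I) (i : ℕ)
    (y : I) (j : ℕ) : Prop :=
  ∃ τ τ' : List I, InPerm x y i j τ ∧ InPerm x y i j τ' ∧
    Before x y (S τ) ∧ Before y x (S τ')

/-- `x_(q) ∈ R(x^i)`: in some request sequence `σ` with `i` requests to `x`, the `q`-th
request to `x` forms an agile pair with some request to another item `y`. -/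
def InR {I : Type} [DecidableEq I] (S : List I → List I) (x : I) (i q : ℕ) : Prop :=
  ∃ (σ : List I) (y : I) (p : ℕ), σ.count x = i ∧ y ≠ x ∧ AgilePairAt S σ p x y ∧
    ((σ[p]? = some x ∧ (σ.take (p + 1)).count x = q) ∨
     (σ[p + 1]? = some x ∧ (σ.take (p + 2)).count x = q))

/-- At positions `p`, `p+1` of `σ`, the `q`-th request to `x` and the `l`-th request to
`y` stand adjacent (in either order). -/
def PairAtPos {I : Type} [DecidableEq I] (σ : List I) (p : ℕ)
    (x : I) (q : ℕ) (y : I) (l : ℕ) : Prop :=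
  (σ[p]? = some x ∧ σ[p + 1]? = some y ∧
    (σ.take (p + 1)).count x = q ∧ (σ.take (p + 2)).count y = l) ∨
  (σ[p]? = some y ∧ σ[p + 1]? = some x ∧
    (σ.take (p + 1)).count y = l ∧ (σ.take (p + 2)).count x = q)

/-!
Call `τ ∈ perm(x^i y^j)` *`x`-first* if its `q`-th request to `x` comes before its `l`-th
request to `y`. A transposition of adjacent requests to `x` and `y` other than the pair
`x_(q)`, `y_(l)` cannot change the order of `x` and `y` in the state: otherwise it would be an
agile pair, putting a second element into `R(x^i)` or `R(y^j)`. Bubble sort by such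
transpositions leads from every `x`-first sequence to `x^i y^j` and from every other one to
`y^j x^i`, so the order of `x` and `y` in `S τ` only depends on whether `τ` is `x`-first.
Transposing `x_(q)`, `y_(l)` exchanges the two classes, and on `λ` this changes the order, so
the two classes carry different orders.
-/

section Lists

variable {α : Type*}

theorem exists_eq_append_cons_cons_of_getElem? {σ : List α} {p : ℕ} {a b : α}
    (ha : σ[p]? = some a) (hb : σ[p + 1]? = some b) :
    ∃ u v, σ = u ++ a :: b :: v ∧ u.length = p := by
  obtain ⟨hp, rfl⟩ := List.getElem?_eq_some_iff.mp ha
  obtain ⟨hp1, rfl⟩ := List.getElem?_eq_some_iff.mp hb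
  refine ⟨σ.take p, σ.drop (p + 2), ?_, by simp; omega⟩
  rw [← List.drop_eq_getElem_cons hp1, ← List.drop_eq_getElem_cons hp, List.take_append_drop]

theorem exists_replicate_append_replicate_or_adjacent {x y : α} {τ : List α}
    (hτ : ∀ z ∈ τ, z = x ∨ z = y) :
    (∃ a b, τ = List.replicate a x ++ List.replicate b y) ∨
      ∃ u v, τ = u ++ y :: x :: v := by
  induction τ with
  | nil => exact .inl ⟨0, 0, rfl⟩
  | cons z t ih =>
    rcases ih fun w hw => hτ w (List.mem_cons_of_mem z hw) with ⟨a, b, rfl⟩ | ⟨u, v, rfl⟩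
    · rcases hτ z List.mem_cons_self with rfl | rfl
      · exact .inl ⟨a + 1, b, rfl⟩
      · cases a with
        | zero => exact .inl ⟨0, b + 1, rfl⟩
        | succ a => exact .inr ⟨[], _, rfl⟩
    · exact .inr ⟨z :: u, v, rfl⟩

variable [DecidableEq α]

def inversions (a b : α) : List α → ℕ
  | [] => 0
  | z :: t => (if z = a then t.count b else 0) + inversions a b t

theorem inversions_append_cons_cons {a b : α} (hab : a ≠ b) (u v : List α) :
    inversions a b (u ++ a :: b :: v) = inversions a b (u ++ b :: a :: v) + 1 := by
  induction u with
  | nil => simp [inversions, hab.symm]; omega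
  | cons z u ih => simp [inversions, ih, List.count_append, hab]; omega

theorem iff_replicate_append_replicate_of_swap {x y : α} (hxy : x ≠ y) {P f : List α → Prop}
    (hP : ∀ u v, P (u ++ y :: x :: v) →
      P (u ++ x :: y :: v) ∧ (f (u ++ y :: x :: v) ↔ f (u ++ x :: y :: v)))
    (τ : List α) (hτ : ∀ z ∈ τ, z = x ∨ z = y) (hPτ : P τ) :
    f τ ↔ f (List.replicate (τ.count x) x ++ List.replicate (τ.count y) y) := by
  rcases exists_replicate_append_replicate_or_adjacent hτ with ⟨a, b, rfl⟩ | ⟨u, v, rfl⟩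
  · simp [List.count_replicate, hxy, hxy.symm]
  · have hswap : (u ++ y :: x :: v).Perm (u ++ x :: y :: v) :=
      .append_left u (.swap x y v)
    obtain ⟨hP', hf⟩ := hP u v hPτ
    rw [hf, hswap.count_eq, hswap.count_eq]
    exact iff_replicate_append_replicate_of_swap hxy hP _
      (fun z hz => hτ z (hswap.mem_iff.mpr hz)) hP'
termination_by inversions y x τ
decreasing_by subst_vars; rw [inversions_append_cons_cons hxy.symm]; omega

/-- The `q`-th occurrence of `x` in `τ` comes before its `l`-th occurrence of `y` (or `τ` has
fewer than `l` occurrences of `y`). -/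
def OccBefore (x : α) (q : ℕ) (y : α) (l : ℕ) (τ : List α) : Prop :=
  ∃ n, q ≤ (τ.take n).count x ∧ (τ.take n).count y < l

section OccBefore

variable {x y : α} {q l : ℕ}

theorem count_take_cons_cons_le (hxy : x ≠ y) (v : List α) (m : ℕ) :
    ((y :: x :: v).take m).count x ≤ ((x :: y :: v).take m).count x ∧
    ((x :: y :: v).take m).count y ≤ ((y :: x :: v).take m).count y := by
  match m with
  | 0 => simp
  | 1 => simp [hxy, hxy.symm]
  | m + 2 => simp [hxy, hxy.symm]

theorem OccBefore.of_swap (hxy : x ≠ y) {u v : List α}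
    (h : OccBefore x q y l (u ++ y :: x :: v)) : OccBefore x q y l (u ++ x :: y :: v) := by
  obtain ⟨n, hx, hy⟩ := h
  have hle := count_take_cons_cons_le hxy v (n - u.length)
  refine ⟨n, ?_, ?_⟩ <;>
  · simp only [List.take_append, List.count_append] at hx hy ⊢
    omega

theorem occBefore_of_designated (hxy : x ≠ y) {u : List α} (v : List α)
    (hq : u.count x + 1 = q) (hl : u.count y + 1 = l) :
    OccBefore x q y l (u ++ x :: y :: v) :=
  ⟨u.length + 1, by simp [List.take_append, List.take_of_length_le]; omega,
    by simp [List.take_append, List.take_of_length_le, hxy]; omega⟩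

theorem not_occBefore_of_designated (hxy : x ≠ y) {u : List α} (v : List α)
    (hq : u.count x + 1 = q) (hl : u.count y + 1 = l) :
    ¬ OccBefore x q y l (u ++ y :: x :: v) := by
  rintro ⟨n, hx, hy⟩
  simp only [List.take_append, List.count_append] at hx hy
  rcases le_or_gt n u.length with hn | hn
  · have := (List.take_sublist n u).count_le x
    simp [Nat.sub_eq_zero_of_le hn] at hx
    omega
  · obtain ⟨m, hm⟩ : ∃ m, n - u.length = m + 1 := ⟨n - u.length - 1, by omega⟩
    rw [List.take_of_length_le hn.le, hm] at hx hy
    cases m <;> simp [hxy, hxy.symm] at hx hy <;> omega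

end OccBefore

end Lists

section Sequences

variable {I : Type}

theorem swapAt_append_cons_cons (u v : List I) (a b : I) :
    SwapAt (u ++ a :: b :: v) u.length = u ++ b :: a :: v := by
  simp [SwapAt]

variable [DecidableEq I] {x y : I} {i j q l : ℕ}

theorem InPerm.perm {τ τ' : List I} (h : InPerm x y i j τ) (hτ : τ.Perm τ') :
    InPerm x y i j τ' :=
  ⟨hτ.count_eq x ▸ h.1, hτ.count_eq y ▸ h.2.1, fun z hz => h.2.2 z (hτ.mem_iff.mpr hz)⟩

theorem PairAtPos.exists_split (hxy : x ≠ y) {σ : List I} {p : ℕ}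
    (h : PairAtPos σ p x q y l) :
    ∃ u v, u.count x + 1 = q ∧ u.count y + 1 = l ∧
      (σ = u ++ x :: y :: v ∧ SwapAt σ p = u ++ y :: x :: v ∨
        σ = u ++ y :: x :: v ∧ SwapAt σ p = u ++ x :: y :: v) := by
  rcases h with ⟨ha, hb, hq, hl⟩ | ⟨ha, hb, hl, hq⟩ <;>
  · obtain ⟨u, v, rfl, rfl⟩ := exists_eq_append_cons_cons_of_getElem? ha hb
    simp [List.take_append, List.take_of_length_le, hxy, hxy.symm] at hq hl
    exact ⟨u, v, by omega, by omega, by simp [swapAt_append_cons_cons]⟩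

/-- `f` is unchanged by every transposition of adjacent requests to `x` and `y` in
`perm(x^i y^j)`, except possibly that of `x_(q)` and `y_(l)`. -/
def SwapInvariantExcept (f : List I → Prop) (x : I) (i q : ℕ) (y : I) (j l : ℕ) : Prop :=
  ∀ u v, InPerm x y i j (u ++ x :: y :: v) → ¬ (u.count x + 1 = q ∧ u.count y + 1 = l) →
    (f (u ++ x :: y :: v) ↔ f (u ++ y :: x :: v))

namespace SwapInvariantExcept

variable {f : List I → Prop}

theorem iff_of_occBefore (hf : SwapInvariantExcept f x i q y j l) (hxy : x ≠ y) {τ : List I}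
    (hτ : InPerm x y i j τ) (ho : OccBefore x q y l τ) :
    f τ ↔ f (List.replicate i x ++ List.replicate j y) := by
  rw [← hτ.1, ← hτ.2.1]
  refine iff_replicate_append_replicate_of_swap hxy
    (P := fun τ => InPerm x y i j τ ∧ OccBefore x q y l τ) ?_ τ hτ.2.2 ⟨hτ, ho⟩
  rintro u v ⟨hin, ho⟩
  have hin' := hin.perm (.append_left u (.swap x y v))
  refine ⟨⟨hin', ho.of_swap hxy⟩, (hf u v hin' ?_).symm⟩
  rintro ⟨hq, hl⟩
  exact not_occBefore_of_designated hxy v hq hl ho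

theorem iff_of_not_occBefore (hf : SwapInvariantExcept f x i q y j l) (hxy : x ≠ y)
    {τ : List I} (hτ : InPerm x y i j τ) (ho : ¬ OccBefore x q y l τ) :
    f τ ↔ f (List.replicate j y ++ List.replicate i x) := by
  rw [← hτ.1, ← hτ.2.1]
  refine iff_replicate_append_replicate_of_swap hxy.symm
    (P := fun τ => InPerm x y i j τ ∧ ¬ OccBefore x q y l τ) ?_ τ
    (fun z hz => (hτ.2.2 z hz).symm) ⟨hτ, ho⟩
  rintro u v ⟨hin, ho⟩
  refine ⟨⟨hin.perm (.append_left u (.swap y x v)), fun h => ho (h.of_swap hxy)⟩,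
    hf u v hin ?_⟩
  rintro ⟨hq, hl⟩
  exact ho (occBefore_of_designated hxy v hq hl)

theorem swapAt_iff (hf : SwapInvariantExcept f x i q y j l) (hxy : x ≠ y) {σ : List I}
    {p : ℕ} (hσ : InPerm x y i j σ) (hpos : PairAtPos σ p x q y l) :
    (f σ ↔ f (SwapAt σ p)) ↔
      (f (List.replicate i x ++ List.replicate j y) ↔
        f (List.replicate j y ++ List.replicate i x)) := by
  obtain ⟨u, v, hq, hl, ⟨rfl, hswap⟩ | ⟨rfl, hswap⟩⟩ := hpos.exists_split hxy <;>
    rw [hswap]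
  · rw [hf.iff_of_occBefore hxy hσ (occBefore_of_designated hxy v hq hl),
      hf.iff_of_not_occBefore hxy (hσ.perm (.append_left u (.swap y x v)))
        (not_occBefore_of_designated hxy v hq hl)]
  · rw [hf.iff_of_not_occBefore hxy hσ (not_occBefore_of_designated hxy v hq hl),
      hf.iff_of_occBefore hxy (hσ.perm (.append_left u (.swap x y v)))
        (occBefore_of_designated hxy v hq hl)]
    exact Iff.comm

end SwapInvariantExcept

end Sequences

section States

variable {I : Type} [DecidableEq I] {x y : I}

theorem before_comm_iff_not {L : List I} (hx : x ∈ L) (hxy : x ≠ y) :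
    Before y x L ↔ ¬ Before x y L := by
  have : L.idxOf x ≠ L.idxOf y := fun h => hxy ((List.idxOf_inj hx).mp h)
  unfold Before
  omega

theorem not_before_of_not_mem {L : List I} (hx : x ∉ L) : ¬ Before x y L := by
  simp [Before, List.idxOf_eq_length hx, List.idxOf_le_length]

theorem mem_of_not_before_iff {S : List I → List I} {L0 : List I}
    (hperm : ∀ σ, (S σ).Perm L0) {σ₁ σ₂ : List I}
    (h : ¬ (Before x y (S σ₁) ↔ Before x y (S σ₂))) : x ∈ L0 := by
  by_contra hx
  have hx' (σ : List I) : x ∉ S σ := fun hmem => hx ((hperm σ).mem_iff.mp hmem)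
  exact h (iff_of_false (not_before_of_not_mem (hx' σ₁)) (not_before_of_not_mem (hx' σ₂)))

theorem swapInvariantExcept_before {S : List I → List I} {L0 : List I}
    (hperm : ∀ σ, (S σ).Perm L0) (hxy : x ≠ y) (hx : x ∈ L0) {i j q l : ℕ}
    (hRx : ∀ q', InR S x i q' → q' = q) (hRy : ∀ l', InR S y j l' → l' = l) :
    SwapInvariantExcept (fun τ => Before x y (S τ)) x i q y j l := by
  intro u v hin hother
  by_contra hchange
  apply hother
  set σ := u ++ x :: y :: v
  have hx_at : σ[u.length]? = some x := by simp [σ]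
  have hy_at : σ[u.length + 1]? = some y := by simp [σ]
  have hswap : SwapAt σ u.length = u ++ y :: x :: v := swapAt_append_cons_cons u v x y
  have hcomm (τ : List I) : Before y x (S τ) ↔ ¬ Before x y (S τ) :=
    before_comm_iff_not ((hperm τ).mem_iff.mpr hx) hxy
  have hagile : AgilePairAt S σ u.length x y := ⟨.inl ⟨hx_at, hy_at⟩, by rwa [hswap]⟩
  have hagile' : AgilePairAt S σ u.length y x :=
    ⟨.inr ⟨hx_at, hy_at⟩, by rw [hcomm, hcomm, not_iff_not]; exact hagile.2⟩
  exact ⟨hRx _ ⟨σ, y, u.length, hin.1, hxy.symm, hagile,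
      .inl ⟨hx_at, by simp [σ, List.take_append, List.take_of_length_le]⟩⟩,
    hRy _ ⟨σ, x, u.length, hin.2.1, hxy, hagile',
      .inr ⟨hy_at, by simp [σ, List.take_append, List.take_of_length_le, hxy]⟩⟩⟩

end States

theorem agile_swap_always_changes_general
    {I : Type} [DecidableEq I] (S : List I → List I) (L0 : List I)
    (hperm : ∀ σ, (S σ).Perm L0)
    (x y : I) (hxy : x ≠ y) (i j q l : ℕ)
    (lam : List I) (p : ℕ)
    (hlam : InPerm x y i j lam)
    (hpos : PairAtPos lam p x q y l)
    (hlamagile : AgilePairAt S lam p x y)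
    (hRx : ∀ q' : ℕ, InR S x i q' → q' = q)
    (hRy : ∀ l' : ℕ, InR S y j l' → l' = l) :
    ∀ (σ : List I) (p' : ℕ), InPerm x y i j σ → PairAtPos σ p' x q y l →
      ¬ (Before x y (S σ) ↔ Before x y (S (SwapAt σ p'))) := by
  have hx := mem_of_not_before_iff hperm hlamagile.2
  have hf := swapInvariantExcept_before hperm hxy hx hRx hRy
  have hsorted := (hf.swapAt_iff hxy hlam hpos).not.mp hlamagile.2
  intro σ p' hσ hpos'
  exact (hf.swapAt_iff hxy hσ hpos').not.mpr hsorted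

/-- Let `x_(q)`, `y_(l)` be an agile pair in some `λ ∈ perm(x^i y^j)`
and suppose `|R(x^i)| = |R(y^j)| = 1`. Then in every `σ ∈ perm(x^i y^j)` in which the
`q`-th request to `x` and the `l`-th request to `y` are adjacent, transposing them
changes the relative order of `x` and `y` in `S(σ)`. -/
theorem agile_swap_always_changes
    {I : Type} [DecidableEq I] (S : List I → List I) (L0 : List I)
    (hperm : ∀ σ, (S σ).Perm L0) (hnodup : L0.Nodup)
    (hproj : Projective S)
    (x y : I) (hxy : x ≠ y) (i j q l : ℕ)
    (lam : List I) (p : ℕ)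
    (hlam : InPerm x y i j lam)
    (hpos : PairAtPos lam p x q y l)
    (hlamagile : AgilePairAt S lam p x y)
    (hRx : ∀ q' : ℕ, InR S x i q' → q' = q)
    (hRy : ∀ l' : ℕ, InR S y j l' → l' = l) :
    ∀ (σ : List I) (p' : ℕ), InPerm x y i j σ → PairAtPos σ p' x q y l →
      ¬ (Before x y (S σ) ↔ Before x y (S (SwapAt σ p'))) :=
  agile_swap_always_changes_general S L0 hperm x y hxy i j q l lam p hlam hpos hlamagile hRx hRy
end
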